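/- Let R be a commutative ring, n ≥ 1, and A an n×n equicofactor matrix over R, i.e., every row sum and every column sum of A equals zero. Then all cofactors of A are equal: for all indices i, j, k, l, the (i,j) cofactor of A equals the (k,l) cofactor of A. -/
import Mathlib


open Matrix

/-- The `(i,j)` cofactor of a square matrix: `(-1)^(i+j)` times the determinant of the
matrix obtained by deleting row `i` and column `j`. -/
def Matrix.cofactor {R : Type*} [CommRing R] {n : ℕ}
    (A : Matrix (Fin (n + 1)) (Fin (n + 1)) R) (i j : Fin (n + 1)) : R :=
  (-1 : R) ^ ((i : ℕ) + (j : ℕ)) * (A.submatrix i.succAbove j.succAbove).det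

lemma det_eq_zero_of_row_sums_zero {R : Type*} [CommRing R] {n : ℕ}
    (M : Matrix (Fin (n + 1)) (Fin (n + 1)) R) (h : ∀ r, ∑ c, M r c = 0) :
    M.det = 0 := by
  have h1 : M *ᵥ (fun _ => (1 : R)) = 0 := by
    ext r
    simpa [Matrix.mulVec, dotProduct] using h r
  have h2 : (Matrix.adjugate M * M) *ᵥ (fun _ => (1 : R)) = 0 := by
    rw [← Matrix.mulVec_mulVec, h1, Matrix.mulVec_zero]
  rw [Matrix.adjugate_mul] at h2
  have := congrFun h2 0
  simpa [Matrix.smul_mulVec, Matrix.one_mulVec] using this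

lemma cofactor_eq_updateRow {R : Type*} [CommRing R] {n : ℕ}
    (A : Matrix (Fin (n + 1)) (Fin (n + 1)) R) (i j : Fin (n + 1)) :
    A.cofactor i j = (A.updateRow i (Pi.single j 1)).det := by
  rw [Matrix.cofactor, ← Matrix.adjugate_fin_succ_eq_det_submatrix, Matrix.adjugate_apply]

/-- Fixing the row index, cofactors don't depend on the column index,
given zero row sums. -/
lemma cofactor_col_eq {R : Type*} [CommRing R] {n : ℕ}
    (A : Matrix (Fin (n + 1)) (Fin (n + 1)) R)
    (hrow : ∀ i, ∑ j, A i j = 0) (i j l : Fin (n + 1)) :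
    A.cofactor i j = A.cofactor i l := by
  rw [cofactor_eq_updateRow, cofactor_eq_updateRow]
  have key : (A.updateRow i (Pi.single j 1 - Pi.single l 1)).det = 0 := by
    apply det_eq_zero_of_row_sums_zero
    intro r
    by_cases hr : r = i
    · subst hr
      simp [Matrix.updateRow_self, Pi.sub_apply, Finset.sum_sub_distrib]
    · simp only [Matrix.updateRow_ne hr]
      exact hrow r
  have expand : (A.updateRow i (Pi.single j 1)).det
      = (A.updateRow i (Pi.single j 1 - Pi.single l 1)).det
        + (A.updateRow i (Pi.single l 1)).det := by
    have h : (Pi.single j (1:R) : Fin (n+1) → R) - Pi.single l 1 + Pi.single l 1 = Pi.single j 1 := by abel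
    rw [← Matrix.det_updateRow_add, h]
  rw [expand, key, zero_add]

lemma cofactor_transpose {R : Type*} [CommRing R] {n : ℕ}
    (A : Matrix (Fin (n + 1)) (Fin (n + 1)) R) (i j : Fin (n + 1)) :
    A.transpose.cofactor j i = A.cofactor i j := by
  rw [Matrix.cofactor, Matrix.cofactor]
  congr 1
  · ring
  · rw [← Matrix.det_transpose (A.submatrix i.succAbove j.succAbove)]
    rfl

/-- All cofactors of an equicofactor matrix (zero row sums and zero column sums) are equal. -/
theorem cofactor_eq_of_equicofactor {R : Type*} [CommRing R] {n : ℕ}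
    (A : Matrix (Fin (n + 1)) (Fin (n + 1)) R)
    (hrow : ∀ i, ∑ j, A i j = 0) (hcol : ∀ j, ∑ i, A i j = 0)
    (i j k l : Fin (n + 1)) :
    A.cofactor i j = A.cofactor k l := by
  have hrowT : ∀ c, ∑ r, A.transpose c r = 0 := by
    intro c
    simpa [Matrix.transpose_apply] using hcol c
  calc A.cofactor i j = A.transpose.cofactor j i := (cofactor_transpose A i j).symm
    _ = A.transpose.cofactor j k := cofactor_col_eq A.transpose hrowT j i k
    _ = A.cofactor k j := cofactor_transpose A k j
    _ = A.cofactor k l := cofactor_col_eq A hrow k j l
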